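/- If f₁, ..., fₙ are vectors in a Banach space with T_t fⱼ = e^{iθⱼt} fⱼ for all t ≥ 0, where (T_t) is a contraction semigroup and θⱼ ∈ ℝ, then for every ε > 0 there exists t ≥ 1 such that ‖T_t f - f‖ ≤ ε ‖f‖ for all f in the linear span of f₁, ..., fₙ. -/

import Mathlib

/-!
The points `(exp (i θⱼ k))ⱼ`, `k ∈ ℕ`, lie in a compact torus, so two of them, `k < l`, are
`δ`-close, and `t = l - k` moves every eigenvalue `exp (i θⱼ t)` within `δ` of `1`. By the open
mapping theorem on the finite-dimensional span, every `g` in it is `∑ cⱼ fⱼ` with `‖c‖ ≤ K ‖g‖`,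
hence `‖T t g - g‖ ≤ ∑ |cⱼ| |exp (i θⱼ t) - 1| ‖fⱼ‖ ≤ δ K (∑ ‖fⱼ‖) ‖g‖`.
-/

open Complex

theorem exists_lt_dist_lt_of_isCompact {X : Type*} [PseudoMetricSpace X] {s : Set X}
    (hs : IsCompact s) {u : ℕ → X} (hu : ∀ k, u k ∈ s) {δ : ℝ} (hδ : 0 < δ) :
    ∃ k l, k < l ∧ dist (u l) (u k) < δ := by
  obtain ⟨_, -, φ, hφ, hlim⟩ := hs.tendsto_subseq hu
  obtain ⟨N, hN⟩ := Metric.cauchySeq_iff'.1 hlim.cauchySeq δ hδ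
  exact ⟨φ N, φ (N + 1), hφ N.lt_succ_self, hN (N + 1) N.le_succ⟩

theorem norm_exp_I_mul_sub_exp_I_mul (θ a b : ℝ) :
    ‖cexp (I * (θ * a)) - cexp (I * (θ * b))‖ = ‖cexp (I * (θ * (a - b : ℝ))) - 1‖ := by
  have hsplit : cexp (I * (θ * a)) - cexp (I * (θ * b)) =
      (cexp (I * (θ * (a - b : ℝ))) - 1) * cexp ((θ * b : ℝ) * I) := by
    rw [sub_mul, one_mul, ← Complex.exp_add]
    push_cast
    ring_nf
  rw [hsplit, norm_mul, norm_exp_ofReal_mul_I, mul_one]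

theorem exists_one_le_forall_norm_exp_sub_one_le {ι : Type*} [Fintype ι] (θ : ι → ℝ)
    {δ : ℝ} (hδ : 0 < δ) :
    ∃ t : ℝ, 1 ≤ t ∧ ∀ j, ‖cexp (I * (θ j * t)) - 1‖ ≤ δ := by
  set u : ℕ → ι → ℂ := fun k j => cexp (I * (θ j * (k : ℝ)))
  have hu : ∀ k, u k ∈ Metric.closedBall 0 1 := fun k =>
    mem_closedBall_zero_iff.2 <| pi_norm_le_iff_of_nonneg zero_le_one |>.2 fun j => by
      simp [u, Complex.norm_exp]
  obtain ⟨k, l, hkl, hdist⟩ := exists_lt_dist_lt_of_isCompact (isCompact_closedBall _ _) hu hδ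
  refine ⟨l - k, by rw [le_sub_iff_add_le']; exact_mod_cast hkl, fun j => ?_⟩
  calc ‖cexp (I * (θ j * (l - k : ℝ))) - 1‖ = dist (u l j) (u k j) := by
        rw [dist_eq_norm, norm_exp_I_mul_sub_exp_I_mul]
    _ ≤ δ := (dist_le_pi_dist _ _ j).trans hdist.le

theorem exists_coeff_norm_le_of_mem_span
    {𝕜 : Type*} [NontriviallyNormedField 𝕜] [CompleteSpace 𝕜]
    {E : Type*} [NormedAddCommGroup E] [NormedSpace 𝕜 E] {ι : Type*} [Fintype ι] (f : ι → E) :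
    ∃ K > 0, ∀ g ∈ Submodule.span 𝕜 (Set.range f),
      ∃ c : ι → 𝕜, ∑ i, c i • f i = g ∧ ‖c‖ ≤ K * ‖g‖ := by
  set Φ := Fintype.linearCombination 𝕜 f
  have := FiniteDimensional.complete 𝕜 (LinearMap.range Φ)
  obtain ⟨K, hK, hpre⟩ :=
    (LinearMap.toContinuousLinearMap Φ.rangeRestrict).exists_preimage_norm_le
      Φ.surjective_rangeRestrict
  refine ⟨K, hK, fun g hg => ?_⟩
  rw [← Fintype.range_linearCombination] at hg
  obtain ⟨c, hc, hcK⟩ := hpre ⟨g, hg⟩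
  refine ⟨c, ?_, hcK⟩
  simpa [Φ, Fintype.linearCombination_apply, Subtype.ext_iff] using hc

theorem norm_map_sum_smul_sub_le {𝕜 : Type*} [NormedField 𝕜]
    {E : Type*} [SeminormedAddCommGroup E] [NormedSpace 𝕜 E] {ι : Type*} [Fintype ι]
    (A : E →ₗ[𝕜] E) (f : ι → E) (μ : ι → 𝕜) (hA : ∀ i, A (f i) = μ i • f i)
    {δ : ℝ} (hμ : ∀ i, ‖μ i - 1‖ ≤ δ) (c : ι → 𝕜) :
    ‖A (∑ i, c i • f i) - ∑ i, c i • f i‖ ≤ ‖c‖ * δ * ∑ i, ‖f i‖ := by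
  have hdiff : A (∑ i, c i • f i) - ∑ i, c i • f i = ∑ i, (c i * (μ i - 1)) • f i := by
    simp only [map_sum, map_smul, hA, ← Finset.sum_sub_distrib, smul_smul, ← sub_smul, mul_sub,
      mul_one]
  rw [hdiff, Finset.mul_sum]
  refine (norm_sum_le _ _).trans (Finset.sum_le_sum fun i _ => ?_)
  rw [norm_smul, norm_mul]
  gcongr
  exacts [norm_le_pi_norm c i, hμ i]

theorem contraction_semigroup_return_on_span
    {B : Type*} [NormedAddCommGroup B] [NormedSpace ℂ B]
    (T : ℝ → B →L[ℂ] B)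
    (n : ℕ) (f : Fin n → B) (θ : Fin n → ℝ)
    (heig : ∀ t : ℝ, 0 ≤ t → ∀ j, T t (f j) = Complex.exp (Complex.I * (θ j * t)) • f j) :
    ∀ ε > 0, ∃ t : ℝ, 1 ≤ t ∧
      ∀ g ∈ Submodule.span ℂ (Set.range f), ‖T t g - g‖ ≤ ε * ‖g‖ := by
  intro ε hε
  obtain ⟨K, hK, hcoeff⟩ := exists_coeff_norm_le_of_mem_span (𝕜 := ℂ) f
  set M := ∑ j, ‖f j‖
  have hM : 0 ≤ M := by positivity
  set δ := ε / (K * (M + 1))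
  obtain ⟨t, ht, hrec⟩ := exists_one_le_forall_norm_exp_sub_one_le θ (δ := δ) (by positivity)
  refine ⟨t, ht, fun g hg => ?_⟩
  obtain ⟨c, rfl, hc⟩ := hcoeff g hg
  calc _ ≤ ‖c‖ * δ * M :=
        norm_map_sum_smul_sub_le (T t).toLinearMap f _ (heig t (by linarith)) hrec c
    _ ≤ K * ‖∑ i, c i • f i‖ * δ * (M + 1) := by gcongr; linarith
    _ = ε * ‖∑ i, c i • f i‖ := by simp only [δ]; field_simp
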